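/- arXiv:1503.07538 — 3 statements merged into one kernel-verified Lean document; each statement's English description precedes it below -/
import Mathlib

section
/- Let H be a Hermitian d×d complex matrix with spectral decomposition H = ∑_{k=1}^{d'} E_k Π_k (E_1 < … < E_{d'} the distinct eigenvalues, Π_k the orthogonal projections onto the corresponding eigenspaces), and let ρ(0) be any d×d complex matrix. Then the infinite time average of the unitarily evolved matrix exists and equals the dephased initial matrix: lim_{T→∞} (1/T)∫₀^T e^{−iHt} ρ(0) e^{iHt} dt = ∑_{k=1}^{d'} Π_k ρ(0) Π_k. -/
/-!
Because the `P k` are orthogonal idempotents summing to `1`, `H * P l = E l • P l` gives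
`e^{cH} P l = e^{c E l} P l`, hence `e^{-iHt} ρ₀ e^{iHt} = ∑ k l, e^{i(E l - E k)t} P k ρ₀ P l`.
The time average of `e^{iωt}` is `1` for `ω = 0` and `0` otherwise, since its integral over
`[0, T]` is bounded by `2 / |ω|`. As the `E k` are distinct, only the diagonal terms survive.
-/

open Matrix Complex Filter

/-- The unitarily time-evolved matrix `e^{-iHt} ρ₀ e^{iHt}`. -/
noncomputable def timeEvol {d : ℕ} (H ρ0 : Matrix (Fin d) (Fin d) ℂ) (t : ℝ) :
    Matrix (Fin d) (Fin d) ℂ :=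
  NormedSpace.exp ((-(Complex.I * t)) • H) * ρ0 * NormedSpace.exp ((Complex.I * t) • H)

section SpectralSum

variable {ι A : Type*} [Fintype ι] [DecidableEq ι]

theorem sum_smul_mul_of_orthogonal [Semiring A] [Module ℂ A] [IsScalarTower ℂ A A]
    {P : ι → A} (hP : ∀ k l, P k * P l = if k = l then P k else 0) (a : ι → ℂ) (l : ι) :
    (∑ k, a k • P k) * P l = a l • P l := by
  simp only [Finset.sum_mul, smul_mul_assoc, hP, smul_ite, smul_zero, Finset.sum_ite_eq',
    Finset.mem_univ, if_true]

theorem exp_mul_eq_smul_of_mul_eq_smul [NormedRing A] [NormedAlgebra ℂ A] [CompleteSpace A]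
    {a p : A} {μ : ℂ} (h : a * p = μ • p) :
    NormedSpace.exp a * p = Complex.exp μ • p := by
  -- `SemiconjBy.exp_right` is stated for normed `ℚ`-algebras.
  let _ : NormedAlgebra ℚ A := NormedAlgebra.restrictScalars ℚ ℂ A
  have hp : SemiconjBy p (algebraMap ℂ A μ) a := by
    rw [SemiconjBy, ← Algebra.commutes, ← Algebra.smul_def, h]
  rw [Complex.exp_eq_exp_ℂ, Algebra.smul_def, Algebra.commutes, NormedSpace.algebraMap_exp_comm]
  exact hp.exp_right.eq.symm

theorem exp_sum_smul_of_orthogonal [NormedRing A] [NormedAlgebra ℂ A] [CompleteSpace A]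
    {P : ι → A} (hP : ∀ k l, P k * P l = if k = l then P k else 0) (hPsum : ∑ k, P k = 1)
    (a : ι → ℂ) :
    NormedSpace.exp (∑ k, a k • P k) = ∑ k, Complex.exp (a k) • P k := by
  calc NormedSpace.exp (∑ k, a k • P k) = ∑ l, NormedSpace.exp (∑ k, a k • P k) * P l := by
        rw [← Finset.mul_sum, hPsum, mul_one]
    _ = ∑ l, Complex.exp (a l) • P l := by
        simp only [exp_mul_eq_smul_of_mul_eq_smul (sum_smul_mul_of_orthogonal hP a _)]

end SpectralSum

attribute [local instance] Matrix.linftyOpNormedRing Matrix.linftyOpNormedAlgebra in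
theorem timeEvol_apply_eq_sum {ι : Type*} [Fintype ι] [DecidableEq ι] {d : ℕ}
    {P : ι → Matrix (Fin d) (Fin d) ℂ} (hP : ∀ k l, P k * P l = if k = l then P k else 0)
    (hPsum : ∑ k, P k = 1) (E : ι → ℝ) (ρ0 : Matrix (Fin d) (Fin d) ℂ) (t : ℝ) (i j : Fin d) :
    timeEvol (∑ k, (E k : ℂ) • P k) ρ0 t i j =
      ∑ k, ∑ l, Complex.exp ((E l - E k : ℝ) * I * t) * (P k * ρ0 * P l) i j := by
  have hexp (c : ℂ) : NormedSpace.exp (c • ∑ k, (E k : ℂ) • P k) =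
      ∑ k, Complex.exp (c * E k) • P k := by
    simp only [Finset.smul_sum, smul_smul]
    exact exp_sum_smul_of_orthogonal hP hPsum _
  rw [timeEvol, hexp, hexp]
  simp only [Finset.sum_mul, Finset.mul_sum, smul_mul_assoc, mul_smul_comm,
    Matrix.sum_apply, Matrix.smul_apply, smul_eq_mul]
  rw [Finset.sum_comm]
  refine Finset.sum_congr rfl fun k _ => Finset.sum_congr rfl fun l _ => ?_
  rw [← mul_assoc, ← Complex.exp_add]
  congr 2
  push_cast
  ring

open MeasureTheory intervalIntegral

def HasTimeAverage (f : ℝ → ℂ) (L : ℂ) : Prop :=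
  Tendsto (fun T : ℝ => (1 / (T : ℂ)) * ∫ t in (0 : ℝ)..T, f t) atTop (nhds L)

theorem hasTimeAverage_const (c : ℂ) : HasTimeAverage (fun _ => c) c := by
  refine tendsto_const_nhds.congr' ?_
  filter_upwards [eventually_ne_atTop 0] with T hT
  rw [intervalIntegral.integral_const, sub_zero, Complex.real_smul, ← mul_assoc, one_div,
    inv_mul_cancel₀ (ofReal_ne_zero.mpr hT), one_mul]

theorem HasTimeAverage.mul_const {f : ℝ → ℂ} {L : ℂ} (h : HasTimeAverage f L) (c : ℂ) :
    HasTimeAverage (fun t => f t * c) (L * c) := by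
  simpa only [HasTimeAverage, intervalIntegral.integral_mul_const, ← mul_assoc] using
    Tendsto.mul_const c h

theorem HasTimeAverage.sum {ι : Type*} {s : Finset ι} {f : ι → ℝ → ℂ} {L : ι → ℂ}
    (hf : ∀ i ∈ s, LocallyIntegrable (f i)) (h : ∀ i ∈ s, HasTimeAverage (f i) (L i)) :
    HasTimeAverage (fun t => ∑ i ∈ s, f i t) (∑ i ∈ s, L i) := by
  have hint (T : ℝ) : ∫ t in (0 : ℝ)..T, ∑ i ∈ s, f i t = ∑ i ∈ s, ∫ t in (0 : ℝ)..T, f i t :=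
    integral_finsetSum fun i hi =>
      ((hf i hi).integrableOn_isCompact isCompact_uIcc).intervalIntegrable
  simpa only [HasTimeAverage, hint, Finset.mul_sum] using tendsto_finsetSum s h

theorem hasTimeAverage_exp_mul_I (ω : ℝ) :
    HasTimeAverage (fun t => Complex.exp (ω * I * t)) (if ω = 0 then 1 else 0) := by
  split_ifs with hω
  · simpa [hω] using hasTimeAverage_const 1
  have hc : (ω : ℂ) * I ≠ 0 := mul_ne_zero (ofReal_ne_zero.mpr hω) I_ne_zero
  have hnorm (s : ℝ) : ‖Complex.exp (ω * I * s)‖ = 1 := by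
    rw [mul_right_comm]; exact_mod_cast norm_exp_ofReal_mul_I (ω * s)
  have hbound : IsBoundedUnder (· ≤ ·) atTop
      (fun T : ℝ => ‖∫ t in (0 : ℝ)..T, Complex.exp (ω * I * t)‖) := by
    refine isBoundedUnder_of ⟨2 / ‖(ω : ℂ) * I‖, fun T => ?_⟩
    rw [integral_exp_mul_complex hc, norm_div]
    gcongr
    calc _ ≤ _ := norm_sub_le _ _
      _ = 2 := by rw [hnorm, hnorm]; norm_num
  have hinv : Tendsto (fun T : ℝ => 1 / (T : ℂ)) atTop (nhds 0) := by
    simpa using (tendsto_inv_atTop_zero (𝕜 := ℝ)).ofReal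
  exact hinv.zero_mul_isBoundedUnder_le hbound

theorem time_average_eq_dephased_general {d d' : ℕ}
    (H : Matrix (Fin d) (Fin d) ℂ)
    (E : Fin d' → ℝ) (hE : StrictMono E)
    (P : Fin d' → Matrix (Fin d) (Fin d) ℂ)
    (hPorth : ∀ k l, P k * P l = if k = l then P k else 0)
    (hPsum : ∑ k, P k = 1)
    (hHspec : H = ∑ k, (E k : ℂ) • P k)
    (ρ0 : Matrix (Fin d) (Fin d) ℂ) :
    ∀ i j : Fin d,
      Tendsto (fun T : ℝ => (1 / (T : ℂ)) * ∫ t in (0:ℝ)..T, timeEvol H ρ0 t i j)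
        atTop (nhds ((∑ k, P k * ρ0 * P k) i j)) := by
  intro i j
  subst hHspec
  have hdephased : (∑ k, P k * ρ0 * P k) i j =
      ∑ k, ∑ l, (if E l - E k = 0 then 1 else 0) * (P k * ρ0 * P l) i j := by
    simp only [sub_eq_zero, hE.injective.eq_iff, ite_mul, one_mul, zero_mul, Finset.sum_ite_eq',
      Finset.mem_univ, if_true, Matrix.sum_apply]
  simp only [timeEvol_apply_eq_sum hPorth hPsum, hdephased]
  refine HasTimeAverage.sum (fun k _ => ?_) fun k _ => HasTimeAverage.sum (fun l _ => ?_)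
    fun l _ => (hasTimeAverage_exp_mul_I _).mul_const _
  all_goals exact Continuous.locallyIntegrable (by fun_prop)

/-- **Infinite time average equals the dephased state.**
Let `H` be a Hermitian `d×d` complex matrix with spectral decomposition
`H = ∑ k, E k • Π k` (with `E` strictly increasing and `Π k` the mutually orthogonal
Hermitian spectral projections summing to `1`), and let `ρ0` be any `d×d` matrix.
Then (entrywise, equivalently in any matrix norm) the infinite time average of
`e^{-iHt} ρ0 e^{iHt}` exists and equals `∑ k, Π k * ρ0 * Π k`. -/
theorem time_average_eq_dephased {d d' : ℕ}
    (H : Matrix (Fin d) (Fin d) ℂ) (hH : H.IsHermitian)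
    (E : Fin d' → ℝ) (hE : StrictMono E)
    (P : Fin d' → Matrix (Fin d) (Fin d) ℂ)
    (hPherm : ∀ k, (P k).IsHermitian)
    (hPorth : ∀ k l, P k * P l = if k = l then P k else 0)
    (hPsum : ∑ k, P k = 1)
    (hHspec : H = ∑ k, (E k : ℂ) • P k)
    (ρ0 : Matrix (Fin d) (Fin d) ℂ) :
    ∀ i j : Fin d,
      Tendsto (fun T : ℝ => (1 / (T : ℂ)) * ∫ t in (0:ℝ)..T, timeEvol H ρ0 t i j)
        atTop (nhds ((∑ k, P k * ρ0 * P k) i j)) :=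
  time_average_eq_dephased_general H E hE P hPorth hPsum hHspec ρ0
end

section
/- Let H be a Hermitian d×d complex matrix with spectral decomposition H = ∑_{k=1}^{d'} E_k Π_k, let ρ(0) be a state on ℂ^d, and let ω := ∑_{k=1}^{d'} Π_k ρ(0) Π_k be the dephased state. Then: (a) ω is a state and for every Hermitian d×d matrix A with AH = HA one has Tr(A ω) = Tr(A ρ(0)); (b) for every state σ on ℂ^d such that Tr(A σ) = Tr(A ρ(0)) holds for every Hermitian A with AH = HA, one has S(σ) ≤ S(ω); and (c) if moreover S(σ) = S(ω) for such a σ, then σ = ω. In other words, ω is the unique maximiser of the von Neumann entropy among all states having the same expectation values as ρ(0) for all conserved quantities of H. -/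
open Matrix Complex
open scoped ComplexOrder

open scoped Classical in
/-- The von Neumann entropy `S(ρ) = -∑ λᵢ log λᵢ` of a (Hermitian) matrix, with the
convention `0 log 0 = 0` (junk value `0` on non-Hermitian matrices). -/
noncomputable def vnEntropy {d : ℕ} (ρ : Matrix (Fin d) (Fin d) ℂ) : ℝ :=
  if h : ρ.IsHermitian then -∑ i, h.eigenvalues i * Real.log (h.eigenvalues i) else 0

lemma trace_star_mul_self_eq_zero' {d : ℕ} {X : Matrix (Fin d) (Fin d) ℂ}
    (h : (Xᴴ * X).trace = 0) : X = 0 := by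
  have h1 : ((∑ j, ∑ i, Complex.normSq (X i j) : ℝ) : ℂ) = 0 := by
    rw [← h]
    simp only [Matrix.trace, Matrix.diag, Matrix.mul_apply, Matrix.conjTranspose_apply]
    push_cast
    refine Finset.sum_congr rfl fun j _ => Finset.sum_congr rfl fun i _ => ?_
    rw [Complex.normSq_eq_conj_mul_self]
    rfl
  rw [Complex.ofReal_eq_zero] at h1
  have h2 := (Finset.sum_eq_zero_iff_of_nonneg (fun j _ => Finset.sum_nonneg
    (fun i _ => Complex.normSq_nonneg _))).mp h1
  ext i j
  have h3 := (Finset.sum_eq_zero_iff_of_nonneg (fun i _ => Complex.normSq_nonneg _)).mp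
    (h2 j (Finset.mem_univ j)) i (Finset.mem_univ i)
  simpa using Complex.normSq_eq_zero.mp h3


lemma vnEntropy_eq {d : ℕ} {ρ : Matrix (Fin d) (Fin d) ℂ} (h : ρ.IsHermitian) :
    vnEntropy ρ = ∑ i, Real.negMulLog (h.eigenvalues i) := by
  rw [vnEntropy, dif_pos h, ← Finset.sum_neg_distrib]
  exact Finset.sum_congr rfl fun i _ => by rw [Real.negMulLog]; ring

lemma jensen_step {d : ℕ} (B : Fin d → Fin d → ℝ) (μ ν : Fin d → ℝ)
    (hB0 : ∀ j i, 0 ≤ B j i) (hBrow : ∀ j, ∑ i, B j i = 1) (hBcol : ∀ i, ∑ j, B j i = 1)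
    (hμ0 : ∀ i, 0 ≤ μ i) (hνB : ∀ j, ν j = ∑ i, B j i * μ i) :
    (∑ i, Real.negMulLog (μ i) ≤ ∑ j, Real.negMulLog (ν j)) ∧
    (∑ i, Real.negMulLog (μ i) = ∑ j, Real.negMulLog (ν j) →
      ∀ j i, B j i ≠ 0 → μ i = ν j) := by
  have hpt : ∀ j, ∑ i, B j i * Real.negMulLog (μ i) ≤ Real.negMulLog (ν j) := by
    intro j
    rw [hνB j]
    have h := Real.concaveOn_negMulLog.le_map_sum (t := Finset.univ) (w := B j) (p := μ)
      (fun i _ => hB0 j i) (hBrow j) (fun i _ => hμ0 i)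
    simpa [smul_eq_mul] using h
  have hsum : ∑ i, Real.negMulLog (μ i) = ∑ j, ∑ i, B j i * Real.negMulLog (μ i) := by
    rw [Finset.sum_comm]
    refine Finset.sum_congr rfl fun i _ => ?_
    rw [← Finset.sum_mul, hBcol i, one_mul]
  constructor
  · rw [hsum]
    exact Finset.sum_le_sum fun j _ => hpt j
  · intro heq j i hBji
    have heach : ∀ j, ∑ i, B j i * Real.negMulLog (μ i) = Real.negMulLog (ν j) := by
      have h := (Finset.sum_eq_sum_iff_of_le (fun j (_ : j ∈ Finset.univ) => hpt j)).mp
        (by rw [← hsum, heq])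
      exact fun j => h j (Finset.mem_univ j)
    have h2 := (Real.strictConcaveOn_negMulLog.map_sum_eq_iff' (t := Finset.univ)
      (w := B j) (p := μ) (fun i _ => hB0 j i) (hBrow j) (fun i _ => hμ0 i)).mp
      (by simpa [smul_eq_mul, ← hνB j] using (heach j).symm)
    have := h2 i (Finset.mem_univ i) hBji
    rw [this, hνB j]
    simp [smul_eq_mul]

lemma pinch_entropy {d d' : ℕ} (P : Fin d' → Matrix (Fin d) (Fin d) ℂ)
    (hPherm : ∀ k, (P k).IsHermitian)
    (hPorth : ∀ k l, P k * P l = if k = l then P k else 0)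
    (hPsum : ∑ k, P k = 1)
    (σ : Matrix (Fin d) (Fin d) ℂ) (hσ : σ.PosSemidef)
    (ω : Matrix (Fin d) (Fin d) ℂ) (hωpsd : ω.PosSemidef)
    (hω : ω = ∑ k, P k * σ * P k) :
    vnEntropy σ ≤ vnEntropy ω ∧ (vnEntropy σ = vnEntropy ω → σ = ω) := by
  classical
  have hσh := hσ.isHermitian
  have hωh := hωpsd.isHermitian
  set μ : Fin d → ℝ := hσh.eigenvalues with hμdef
  set ν : Fin d → ℝ := hωh.eigenvalues with hνdef
  set Us : Matrix (Fin d) (Fin d) ℂ := (hσh.eigenvectorUnitary : Matrix (Fin d) (Fin d) ℂ) with hUsdef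
  set Uw : Matrix (Fin d) (Fin d) ℂ := (hωh.eigenvectorUnitary : Matrix (Fin d) (Fin d) ℂ) with hUwdef
  have hUs1 : Us * star Us = 1 := mem_unitaryGroup_iff.mp hσh.eigenvectorUnitary.2
  have hUs2 : star Us * Us = 1 := mem_unitaryGroup_iff'.mp hσh.eigenvectorUnitary.2
  have hUw1 : Uw * star Uw = 1 := mem_unitaryGroup_iff.mp hωh.eigenvectorUnitary.2
  have hUw2 : star Uw * Uw = 1 := mem_unitaryGroup_iff'.mp hωh.eigenvectorUnitary.2
  have hspecσ : σ = Us * diagonal (Complex.ofReal ∘ μ) * star Us := hσh.spectral_theorem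
  have hspecω : ω = Uw * diagonal (Complex.ofReal ∘ ν) * star Uw := hωh.spectral_theorem
  have hμ0 : ∀ i, 0 ≤ μ i := fun i => hσ.eigenvalues_nonneg i
  set M : Fin d' → Matrix (Fin d) (Fin d) ℂ := fun k => star Uw * P k * Us with hMdef'
  have hMdef : ∀ k, M k = star Uw * P k * Us := fun k => rfl
  have hPP : ∀ k, P k * P k = P k := fun k => by simpa using hPorth k k
  have hMH : ∀ k, (M k)ᴴ = star Us * P k * Uw := by
    intro k
    simp [hMdef', Matrix.star_eq_conjTranspose, Matrix.conjTranspose_mul, (hPherm k).eq, mul_assoc]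
  have hMsum1 : ∑ k, (M k)ᴴ * M k = 1 := by
    have h1 : ∀ k, (M k)ᴴ * M k = star Us * P k * Us := by
      intro k
      rw [hMH, hMdef]
      calc star Us * P k * Uw * (star Uw * P k * Us)
          = star Us * (P k * (Uw * star Uw) * P k) * Us := by noncomm_ring
        _ = star Us * P k * Us := by rw [hUw1, mul_one, hPP]
    calc ∑ k, (M k)ᴴ * M k = star Us * (∑ k, P k) * Us := by
          simp only [h1, ← Finset.sum_mul, ← Finset.mul_sum]
      _ = 1 := by rw [hPsum, mul_one, hUs2]
  have hMsum2 : ∑ k, M k * (M k)ᴴ = 1 := by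
    have h1 : ∀ k, M k * (M k)ᴴ = star Uw * P k * Uw := by
      intro k
      rw [hMH, hMdef]
      calc star Uw * P k * Us * (star Us * P k * Uw)
          = star Uw * (P k * (Us * star Us) * P k) * Uw := by noncomm_ring
        _ = star Uw * P k * Uw := by rw [hUs1, mul_one, hPP]
    calc ∑ k, M k * (M k)ᴴ = star Uw * (∑ k, P k) * Uw := by
          simp only [h1, ← Finset.sum_mul, ← Finset.mul_sum]
      _ = 1 := by rw [hPsum, mul_one, hUw2]
  set B : Fin d → Fin d → ℝ := fun j i => ∑ k, Complex.normSq (M k j i) with hBdef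
  have hB0 : ∀ j i, 0 ≤ B j i := fun j i =>
    Finset.sum_nonneg fun k _ => Complex.normSq_nonneg _
  have hBcol : ∀ i, ∑ j, B j i = 1 := by
    intro i
    have h3 : ((∑ j, B j i : ℝ) : ℂ) = ((1 : Matrix (Fin d) (Fin d) ℂ)) i i := by
      rw [← hMsum1]
      simp only [Matrix.sum_apply, Matrix.mul_apply, Matrix.conjTranspose_apply, hBdef]
      push_cast
      rw [Finset.sum_comm]
      refine Finset.sum_congr rfl fun k _ => Finset.sum_congr rfl fun j _ => ?_
      rw [Complex.normSq_eq_conj_mul_self]; rfl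
    rw [Matrix.one_apply_eq] at h3
    exact_mod_cast h3
  have hBrow : ∀ j, ∑ i, B j i = 1 := by
    intro j
    have h3 : ((∑ i, B j i : ℝ) : ℂ) = ((1 : Matrix (Fin d) (Fin d) ℂ)) j j := by
      rw [← hMsum2]
      simp only [Matrix.sum_apply, Matrix.mul_apply, Matrix.conjTranspose_apply, hBdef]
      push_cast
      rw [Finset.sum_comm]
      refine Finset.sum_congr rfl fun k _ => Finset.sum_congr rfl fun i _ => ?_
      rw [← Complex.mul_conj]; rfl
    rw [Matrix.one_apply_eq] at h3
    exact_mod_cast h3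
  have hνB : ∀ j, ν j = ∑ i, B j i * μ i := by
    have key : diagonal (Complex.ofReal ∘ ν) = ∑ k, M k * diagonal (Complex.ofReal ∘ μ) * (M k)ᴴ := by
      calc diagonal (Complex.ofReal ∘ ν)
          = (star Uw * Uw) * diagonal (Complex.ofReal ∘ ν) * (star Uw * Uw) := by
            rw [hUw2, one_mul, mul_one]
        _ = star Uw * ω * Uw := by rw [hspecω]; noncomm_ring
        _ = ∑ k, M k * diagonal (Complex.ofReal ∘ μ) * (M k)ᴴ := by
            rw [hω, hspecσ, Finset.mul_sum, Finset.sum_mul]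
            refine Finset.sum_congr rfl fun k _ => ?_
            rw [hMH k, hMdef k]
            noncomm_ring
    intro j
    have h2 := congrFun (congrFun key j) j
    rw [Matrix.diagonal_apply_eq] at h2
    simp only [Matrix.sum_apply, Matrix.mul_apply, Matrix.diagonal_apply,
      Matrix.conjTranspose_apply, Function.comp_apply, mul_ite, ite_mul, mul_zero, zero_mul,
      Finset.sum_ite_eq, Finset.sum_ite_eq', Finset.mem_univ, if_true] at h2
    have h1 : ((ν j : ℂ)) = ((∑ i, B j i * μ i : ℝ) : ℂ) := by
      rw [h2, hBdef]
      push_cast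
      rw [Finset.sum_comm]
      refine Finset.sum_congr rfl fun i _ => ?_
      rw [Finset.sum_mul]
      refine Finset.sum_congr rfl fun k _ => ?_
      rw [Complex.normSq_eq_conj_mul_self,
        show (starRingEnd ℂ) (M k j i) = star (M k j i) from rfl]
      ring
    exact_mod_cast h1
  obtain ⟨hle, heqcase⟩ := jensen_step B μ ν hB0 hBrow hBcol hμ0 hνB
  have hentσ : vnEntropy σ = ∑ i, Real.negMulLog (μ i) := vnEntropy_eq hσh
  have hentω : vnEntropy ω = ∑ j, Real.negMulLog (ν j) := vnEntropy_eq hωh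
  refine ⟨by rw [hentσ, hentω]; exact hle, ?_⟩
  intro heq
  have hkey : ∀ j i, B j i ≠ 0 → μ i = ν j := heqcase (by rw [← hentσ, ← hentω, heq])
  have hCsum : star Us * Uw = ∑ k, (M k)ᴴ := by
    calc star Us * Uw = star Us * (∑ k, P k) * Uw := by rw [hPsum, mul_one]
      _ = ∑ k, (M k)ᴴ := by
          simp only [Finset.mul_sum, Finset.sum_mul, hMH]
  have hCkey : ∀ i j, (star Us * Uw) i j ≠ 0 → μ i = ν j := by
    intro i j hne
    have hex : ∃ k, M k j i ≠ 0 := by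
      by_contra hall
      push_neg at hall
      apply hne
      rw [hCsum, Matrix.sum_apply]
      refine Finset.sum_eq_zero fun k _ => ?_
      rw [Matrix.conjTranspose_apply, hall k, star_zero]
    obtain ⟨k, hk⟩ := hex
    refine hkey j i (ne_of_gt ?_)
    exact Finset.sum_pos' (fun k _ => Complex.normSq_nonneg _)
      ⟨k, Finset.mem_univ k, Complex.normSq_pos.mpr hk⟩
  have hDC : diagonal (Complex.ofReal ∘ μ) * (star Us * Uw)
      = (star Us * Uw) * diagonal (Complex.ofReal ∘ ν) := by
    ext i j
    rw [Matrix.diagonal_mul, Matrix.mul_diagonal]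
    by_cases hc : (star Us * Uw) i j = 0
    · rw [hc, mul_zero, zero_mul]
    · rw [Function.comp_apply, Function.comp_apply, hCkey i j hc, mul_comm]
  have hσUw : σ * Uw = Uw * diagonal (Complex.ofReal ∘ ν) := by
    calc σ * Uw = Us * (diagonal (Complex.ofReal ∘ μ) * (star Us * Uw)) := by
          rw [hspecσ]; noncomm_ring
      _ = Us * ((star Us * Uw) * diagonal (Complex.ofReal ∘ ν)) := by rw [hDC]
      _ = (Us * star Us) * (Uw * diagonal (Complex.ofReal ∘ ν)) := by noncomm_ring
      _ = Uw * diagonal (Complex.ofReal ∘ ν) := by rw [hUs1, one_mul]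
  calc σ = σ * (Uw * star Uw) := by rw [hUw1, mul_one]
    _ = (σ * Uw) * star Uw := by rw [mul_assoc]
    _ = Uw * diagonal (Complex.ofReal ∘ ν) * star Uw := by rw [hσUw]
    _ = ω := hspecω.symm

/-- **Maximum entropy principle.** The dephased state `ω = ∑ k, Π k * ρ0 * Π k` is a state
having the same expectation values as `ρ0` for all conserved quantities of `H`, and among
all such states it is the unique maximiser of the von Neumann entropy. -/
theorem maximum_entropy_principle {d d' : ℕ}
    (H : Matrix (Fin d) (Fin d) ℂ) (hH : H.IsHermitian)
    (E : Fin d' → ℝ) (hE : StrictMono E)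
    (P : Fin d' → Matrix (Fin d) (Fin d) ℂ)
    (hPherm : ∀ k, (P k).IsHermitian)
    (hPorth : ∀ k l, P k * P l = if k = l then P k else 0)
    (hPsum : ∑ k, P k = 1)
    (hHspec : H = ∑ k, (E k : ℂ) • P k)
    (ρ0 : Matrix (Fin d) (Fin d) ℂ) (hρ0 : ρ0.PosSemidef) (hρ0tr : ρ0.trace = 1)
    (ω : Matrix (Fin d) (Fin d) ℂ) (hω : ω = ∑ k, P k * ρ0 * P k) :
    (ω.PosSemidef ∧ ω.trace = 1 ∧
      ∀ A : Matrix (Fin d) (Fin d) ℂ, A.IsHermitian → A * H = H * A →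
        (A * ω).trace = (A * ρ0).trace) ∧
    (∀ σ : Matrix (Fin d) (Fin d) ℂ, σ.PosSemidef → σ.trace = 1 →
      (∀ A : Matrix (Fin d) (Fin d) ℂ, A.IsHermitian → A * H = H * A →
        (A * σ).trace = (A * ρ0).trace) →
      vnEntropy σ ≤ vnEntropy ω) ∧
    (∀ σ : Matrix (Fin d) (Fin d) ℂ, σ.PosSemidef → σ.trace = 1 →
      (∀ A : Matrix (Fin d) (Fin d) ℂ, A.IsHermitian → A * H = H * A →
        (A * σ).trace = (A * ρ0).trace) →
      vnEntropy σ = vnEntropy ω → σ = ω) := by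
    classical
  have hPP : ∀ k, P k * P k = P k := fun k => by simpa using hPorth k k
  -- ω is PSD
  have hωpsd : ω.PosSemidef := by
    rw [hω]
    refine Finset.sum_induction _ _ (fun a b ha hb => ha.add hb) Matrix.PosSemidef.zero
      fun k _ => ?_
    have h := hρ0.mul_mul_conjTranspose_same (P k)
    rwa [(hPherm k).eq] at h
  -- trace ω = 1
  have hωtr : ω.trace = 1 := by
    rw [hω, Matrix.trace_sum]
    have h1 : ∀ k, (P k * ρ0 * P k).trace = (P k * ρ0).trace := by
      intro k
      rw [Matrix.trace_mul_comm, ← Matrix.mul_assoc, hPP]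
    calc ∑ k, (P k * ρ0 * P k).trace = ∑ k, (P k * ρ0).trace := by simp only [h1]
      _ = ((∑ k, P k) * ρ0).trace := by rw [Finset.sum_mul, Matrix.trace_sum]
      _ = 1 := by rw [hPsum, one_mul, hρ0tr]
  -- spectral projections act on H
  have hHP : ∀ l, H * P l = (E l : ℂ) • P l := by
    intro l
    rw [hHspec, Finset.sum_mul]
    rw [Finset.sum_eq_single l]
    · rw [smul_mul_assoc, hPP]
    · intro k _ hkl
      rw [smul_mul_assoc, hPorth k l, if_neg hkl, smul_zero]
    · simp
  have hPH : ∀ k, P k * H = (E k : ℂ) • P k := by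
    intro k
    rw [hHspec, Finset.mul_sum]
    rw [Finset.sum_eq_single k]
    · rw [mul_smul_comm, hPP]
    · intro l _ hlk
      rw [mul_smul_comm, hPorth k l, if_neg (Ne.symm hlk), smul_zero]
    · simp
  -- commutant decomposition
  have hdecomp : ∀ A : Matrix (Fin d) (Fin d) ℂ, A * H = H * A →
      ∑ k, P k * A * P k = A := by
    intro A hAH
    have hoff : ∀ k l, k ≠ l → P k * A * P l = 0 := by
      intro k l hkl
      have h1 : P k * (A * H) * P l = (E l : ℂ) • (P k * A * P l) := by
        calc P k * (A * H) * P l = P k * A * (H * P l) := by noncomm_ring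
          _ = P k * A * ((E l : ℂ) • P l) := by rw [hHP]
          _ = (E l : ℂ) • (P k * A * P l) := by rw [mul_smul_comm]
      have h2 : P k * (H * A) * P l = (E k : ℂ) • (P k * A * P l) := by
        calc P k * (H * A) * P l = (P k * H) * (A * P l) := by noncomm_ring
          _ = ((E k : ℂ) • P k) * (A * P l) := by rw [hPH]
          _ = (E k : ℂ) • (P k * A * P l) := by rw [smul_mul_assoc, Matrix.mul_assoc]
      have h3 : ((E l : ℂ) - (E k : ℂ)) • (P k * A * P l) = 0 := by
        rw [sub_smul, ← h1, ← h2, hAH, sub_self]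
      have h4 : (E l : ℂ) - (E k : ℂ) ≠ 0 := by
        rw [sub_ne_zero]
        simp only [ne_eq, Complex.ofReal_inj]
        exact fun h => hkl (hE.injective h.symm)
      exact (smul_eq_zero.mp h3).resolve_left h4
    have h5 : A = (∑ k, P k) * A * (∑ l, P l) := by rw [hPsum, one_mul, mul_one]
    calc ∑ k, P k * A * P k = ∑ k, ∑ l, P k * A * P l := by
          refine Finset.sum_congr rfl fun k _ => ?_
          rw [Finset.sum_eq_single k]
          · exact fun l _ hlk => hoff k l (Ne.symm hlk)
          · simp
      _ = (∑ k, P k) * A * (∑ l, P l) := by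
          rw [Finset.sum_mul, Finset.sum_mul]
          refine Finset.sum_congr rfl fun k _ => ?_
          rw [Finset.mul_sum]
      _ = A := h5.symm
  -- part (a) trace identity
  have hatrace : ∀ A : Matrix (Fin d) (Fin d) ℂ, A * H = H * A →
      (A * ω).trace = (A * ρ0).trace := by
    intro A hAH
    rw [hω, Finset.mul_sum, Matrix.trace_sum]
    have h1 : ∀ k, (A * (P k * ρ0 * P k)).trace = ((P k * A * P k) * ρ0).trace := by
      intro k
      calc (A * (P k * ρ0 * P k)).trace = ((A * (P k * ρ0)) * P k).trace := by
            rw [show A * (P k * ρ0 * P k) = (A * (P k * ρ0)) * P k by noncomm_ring]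
        _ = (P k * (A * (P k * ρ0))).trace := by rw [Matrix.trace_mul_comm]
        _ = ((P k * A * P k) * ρ0).trace := by noncomm_ring
    calc ∑ k, (A * (P k * ρ0 * P k)).trace = ∑ k, ((P k * A * P k) * ρ0).trace := by
          simp only [h1]
      _ = ((∑ k, P k * A * P k) * ρ0).trace := by rw [Finset.sum_mul, Matrix.trace_sum]
      _ = (A * ρ0).trace := by rw [hdecomp A hAH]
  -- constraints force the pinching of σ to agree with that of ρ0
  have hpinchEq : ∀ σ : Matrix (Fin d) (Fin d) ℂ, σ.IsHermitian →
      (∀ A : Matrix (Fin d) (Fin d) ℂ, A.IsHermitian → A * H = H * A →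
        (A * σ).trace = (A * ρ0).trace) →
      ∀ k, P k * σ * P k = P k * ρ0 * P k := by
    intro σ hσh hcon
    intro k
    set X : Matrix (Fin d) (Fin d) ℂ := P k * σ * P k - P k * ρ0 * P k with hXdef
    have hherm : ∀ Y : Matrix (Fin d) (Fin d) ℂ, Y.IsHermitian → (P k * Y * P k).IsHermitian := by
      intro Y hY
      have : (P k * Y * P k)ᴴ = P k * Y * P k := by
        rw [Matrix.conjTranspose_mul, Matrix.conjTranspose_mul, hY.eq, (hPherm k).eq,
          Matrix.mul_assoc]
      exact this
    have hXherm : X.IsHermitian := (hherm σ hσh).sub (hherm ρ0 hρ0.isHermitian)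
    have hXP : X = P k * (σ - ρ0) * P k := by
      rw [hXdef, Matrix.mul_sub, Matrix.sub_mul]
    have hXcomm : X * H = H * X := by
      have h1 : X * H = (E k : ℂ) • X := by
        calc X * H = P k * (σ - ρ0) * (P k * H) := by rw [hXP]; noncomm_ring
          _ = P k * (σ - ρ0) * ((E k : ℂ) • P k) := by rw [hPH]
          _ = (E k : ℂ) • X := by rw [hXP, mul_smul_comm]
      have h2 : H * X = (E k : ℂ) • X := by
        calc H * X = (H * P k) * ((σ - ρ0) * P k) := by rw [hXP]; noncomm_ring
          _ = ((E k : ℂ) • P k) * ((σ - ρ0) * P k) := by rw [hHP]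
          _ = (E k : ℂ) • X := by rw [hXP, smul_mul_assoc, Matrix.mul_assoc]
      rw [h1, h2]
    have htr0 : (X * (σ - ρ0)).trace = 0 := by
      have := hcon X hXherm hXcomm
      rw [Matrix.mul_sub, Matrix.trace_sub, this, sub_self]
    have hXX : (Xᴴ * X).trace = 0 := by
      rw [hXherm.eq]
      calc (X * X).trace = (X * (P k * (σ - ρ0) * P k)).trace := by rw [← hXP]
        _ = ((P k * X * P k) * (σ - ρ0)).trace := by
            rw [show X * (P k * (σ - ρ0) * P k) = (X * (P k * (σ - ρ0))) * P k by noncomm_ring,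
              Matrix.trace_mul_comm,
              show P k * (X * (P k * (σ - ρ0))) = (P k * X * P k) * (σ - ρ0) by noncomm_ring]
        _ = (X * (σ - ρ0)).trace := by
            rw [show P k * X * P k = X by
              rw [hXP, show P k * (P k * (σ - ρ0) * P k) * P k
                = (P k * P k) * (σ - ρ0) * (P k * P k) by noncomm_ring, hPP]]
        _ = 0 := htr0
    have := trace_star_mul_self_eq_zero' hXX
    rwa [hXdef, sub_eq_zero] at this
  refine ⟨⟨hωpsd, hωtr, fun A _ hAH => hatrace A hAH⟩, ?_, ?_⟩
  · intro σ hσ hσtr hcon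
    have hωσ : ω = ∑ k, P k * σ * P k := by
      rw [hω]
      exact Finset.sum_congr rfl fun k _ => (hpinchEq σ hσ.isHermitian hcon k).symm
    exact (pinch_entropy P hPherm hPorth hPsum σ hσ ω hωpsd hωσ).1
  · intro σ hσ hσtr hcon heq
    have hωσ : ω = ∑ k, P k * σ * P k := by
      rw [hω]
      exact Finset.sum_congr rfl fun k _ => (hpinchEq σ hσ.isHermitian hcon k).symm
    exact (pinch_entropy P hPherm hPorth hPsum σ hσ ω hωpsd hωσ).2 heq
end

section
/- Consider a bipartite system whose operators are matrices indexed by (Fin d_S × Fin d_B) × (Fin d_S × Fin d_B) (operators on ℂ^{d_S}⊗ℂ^{d_B}). Let H be Hermitian with spectral decomposition H = ∑_{k=1}^{d'} E_k Π_k. For j = 1,2, let φ_j ∈ ℂ^{d_S} and χ_j ∈ ℂ^{d_B} be unit vectors and let ψ_j := (φ_j φ_j†) ⊗ (χ_j χ_j†) be the corresponding pure product states. Set p_k^{(j)} := Tr(Π_k ψ_j), ω^{S(j)} := Tr_B( ∑_{k=1}^{d'} Π_k ψ_j Π_k ), and R_j := ∑_{k : p_k^{(j)} > 0} p_k^{(j)}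 · D( Tr_B(Π_k ψ_j Π_k)/p_k^{(j)}, φ_j φ_j† ) (the effective entanglement in the eigenbasis). Then D( ω^{S(1)}, ω^{S(2)} ) ≥ D( φ_1 φ_1†, φ_2 φ_2† ) − R_1 − R_2. -/
/-!
Dephasing `ψ_j` in the eigenbasis writes `ω^{S(j)}` as the convex combination `∑ₖ pₖ ρₖ` of the
normalised states `ρₖ = Tr_B(Πₖ ψ_j Πₖ) / pₖ`, so convexity of the trace distance gives
`D(ω^{S(j)}, φ_j φ_j†) ≤ R_j`, and the claim is the triangle inequality through `ω^{S(0)}` and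
`ω^{S(1)}`. For Hermitian matrices the triangle inequality of the trace norm follows from
`‖A‖₁ = max_V Re Tr(V A)` over unitaries `V`, the maximum being attained at the sign of `A`.
-/

open Matrix Complex
open scoped ComplexOrder Kronecker Classical

/-- The partial trace over the bath `B` of an operator on `ℂ^{d_S} ⊗ ℂ^{d_B}`. -/
noncomputable def ptraceB {dS dB : ℕ}
    (M : Matrix (Fin dS × Fin dB) (Fin dS × Fin dB) ℂ) : Matrix (Fin dS) (Fin dS) ℂ :=
  Matrix.of fun i j => ∑ b : Fin dB, M (i, b) (j, b)

/-- The trace norm `‖M‖₁ = Tr √(Mᴴ M)` of a matrix. -/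
noncomputable def traceNorm {n : Type*} [Fintype n] [DecidableEq n] (M : Matrix n n ℂ) : ℝ :=
  (((Matrix.posSemidef_conjTranspose_mul_self M).1.eigenvectorUnitary.1 *
      diagonal (((↑) : ℝ → ℂ) ∘ (√·) ∘ (Matrix.posSemidef_conjTranspose_mul_self M).1.eigenvalues) *
      (star (Matrix.posSemidef_conjTranspose_mul_self M).1.eigenvectorUnitary : Matrix n n ℂ)).trace).re

/-- The trace distance `½ ‖ρ - σ‖₁`. -/
noncomputable def traceDist {n : Type*} [Fintype n] [DecidableEq n] (ρ σ : Matrix n n ℂ) : ℝ :=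
  (1 / 2) * traceNorm (ρ - σ)

open scoped MatrixOrder

section TraceNorm

variable {n : Type*} [Fintype n] [DecidableEq n]

lemma traceNorm_eq_re_trace_abs (M : Matrix n n ℂ) : traceNorm M = (CFC.abs M).trace.re := by
  have h := posSemidef_conjTranspose_mul_self M
  rw [CFC.abs, star_eq_conjTranspose, CFC.sqrt_eq_real_sqrt _ h.nonneg, cfcₙ_eq_cfc, h.1.cfc_eq,
    IsHermitian.cfc, Unitary.conjStarAlgAut_apply, traceNorm]
  rfl

lemma traceNorm_neg (M : Matrix n n ℂ) : traceNorm (-M) = traceNorm M := by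
  simp only [traceNorm_eq_re_trace_abs, CFC.abs_neg]

lemma traceNorm_zero : traceNorm (0 : Matrix n n ℂ) = 0 := by
  simp [traceNorm_eq_re_trace_abs]

lemma traceNorm_smul (r : ℝ) (M : Matrix n n ℂ) : traceNorm (r • M) = |r| * traceNorm M := by
  simp [traceNorm_eq_re_trace_abs, CFC.abs_smul, trace_smul]

namespace Matrix.IsHermitian

variable {A : Matrix n n ℂ} (hA : A.IsHermitian)
include hA

lemma trace_cfc (f : ℝ → ℝ) : (cfc f A).trace = ∑ i, (f (hA.eigenvalues i) : ℂ) := by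
  rw [hA.cfc_eq, IsHermitian.cfc, Unitary.conjStarAlgAut_apply, trace_mul_cycle,
    Unitary.coe_star_mul_self, one_mul, trace_diagonal]
  rfl

lemma traceNorm_eq_sum_abs_eigenvalues : traceNorm A = ∑ i, |hA.eigenvalues i| := by
  rw [traceNorm_eq_re_trace_abs, CFC.abs_eq_cfc_norm A hA, hA.trace_cfc, re_sum]
  simp

lemma re_trace_mul_le_traceNorm {V : Matrix n n ℂ} (hV : V ∈ unitaryGroup n ℂ) :
    (V * A).trace.re ≤ traceNorm A := by
  set U : Matrix n n ℂ := (hA.eigenvectorUnitary : Matrix n n ℂ)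
  set W := star U * V * U
  have hW : W ∈ unitaryGroup n ℂ :=
    Submonoid.mul_mem _ (Submonoid.mul_mem _ (Unitary.star_mem hA.eigenvectorUnitary.2) hV)
      hA.eigenvectorUnitary.2
  have htrace : (V * A).trace = ∑ i, W i i * hA.eigenvalues i := by
    conv_lhs => rw [hA.spectral_theorem, Unitary.conjStarAlgAut_apply]
    rw [← mul_assoc, ← mul_assoc, trace_mul_cycle, ← mul_assoc]
    simp only [trace, diag, mul_diagonal, W]
    rfl
  rw [htrace, hA.traceNorm_eq_sum_abs_eigenvalues, re_sum]
  gcongr with i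
  calc (W i i * hA.eigenvalues i).re = (W i i).re * hA.eigenvalues i := re_mul_ofReal _ _
    _ ≤ |(W i i).re| * |hA.eigenvalues i| := by rw [← abs_mul]; exact le_abs_self _
    _ ≤ |hA.eigenvalues i| := mul_le_of_le_one_left (abs_nonneg _)
        ((abs_re_le_norm _).trans (entry_norm_bound_of_unitary hW i i))

lemma exists_unitary_re_trace_mul_eq_traceNorm :
    ∃ V ∈ unitaryGroup n ℂ, (V * A).trace.re = traceNorm A := by
  set s : ℝ → ℝ := fun x => if 0 ≤ x then 1 else -1
  have hcont : ContinuousOn s (spectrum ℝ A) := (Set.toFinite _).continuousOn s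
  have hsq : cfc s A * cfc s A = 1 := by
    rw [← cfc_mul s s A, ← cfc_const_one ℝ A]
    exact cfc_congr fun x _ => by by_cases hx : 0 ≤ x <;> simp [s, hx]
  have habs : cfc s A * A = CFC.abs A := calc
    cfc s A * A = cfc s A * cfc (fun x => x) A := by rw [cfc_id' ℝ A hA.isSelfAdjoint]
    _ = cfc (fun x => s x * x) A := (cfc_mul s _ A).symm
    _ = cfc (‖·‖) A := cfc_congr fun x _ => by
      by_cases hx : 0 ≤ x
      · simp [s, hx, abs_of_nonneg hx]
      · simp [s, hx, abs_of_neg (not_le.mp hx)]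
    _ = CFC.abs A := (CFC.abs_eq_cfc_norm A hA.isSelfAdjoint).symm
  refine ⟨cfc s A, ?_, by rw [habs, traceNorm_eq_re_trace_abs]⟩
  rw [mem_unitaryGroup_iff, (cfc_predicate s A).star_eq, hsq]

lemma traceNorm_add_le {B : Matrix n n ℂ} (hB : B.IsHermitian) :
    traceNorm (A + B) ≤ traceNorm A + traceNorm B := by
  obtain ⟨V, hV, hVeq⟩ := (hA.add hB).exists_unitary_re_trace_mul_eq_traceNorm
  rw [← hVeq, mul_add, trace_add, add_re]
  exact add_le_add (hA.re_trace_mul_le_traceNorm hV) (hB.re_trace_mul_le_traceNorm hV)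

end Matrix.IsHermitian

lemma traceNorm_sum_le {ι : Type*} (s : Finset ι) {A : ι → Matrix n n ℂ}
    (hA : ∀ i ∈ s, (A i).IsHermitian) :
    traceNorm (∑ i ∈ s, A i) ≤ ∑ i ∈ s, traceNorm (A i) := by
  induction s using Finset.cons_induction with
  | empty => simp [traceNorm_zero]
  | cons a s ha ih =>
    rw [Finset.forall_mem_cons] at hA
    rw [Finset.sum_cons, Finset.sum_cons]
    have hsum : (∑ i ∈ s, A i).IsHermitian :=
      (isSelfAdjoint_sum s fun i hi => (hA.2 i hi).isSelfAdjoint).isHermitian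
    exact (hA.1.traceNorm_add_le hsum).trans (add_le_add le_rfl (ih hA.2))

end TraceNorm

section TraceDistance

variable {n : Type*} [Fintype n] [DecidableEq n]

lemma traceDist_comm (ρ σ : Matrix n n ℂ) : traceDist ρ σ = traceDist σ ρ := by
  rw [traceDist, traceDist, ← traceNorm_neg, neg_sub]

lemma traceDist_triangle {ρ σ τ : Matrix n n ℂ} (hρ : ρ.IsHermitian) (hσ : σ.IsHermitian)
    (hτ : τ.IsHermitian) : traceDist ρ τ ≤ traceDist ρ σ + traceDist σ τ := by
  have h := (hρ.sub hσ).traceNorm_add_le (hσ.sub hτ)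
  rw [sub_add_sub_cancel] at h
  simp only [traceDist]
  linarith

lemma traceDist_sum_smul_le {ι : Type*} (s : Finset ι) {w : ι → ℝ} (hw : ∀ i ∈ s, 0 ≤ w i)
    (hw₁ : ∑ i ∈ s, w i = 1) {ρ : ι → Matrix n n ℂ} (hρ : ∀ i ∈ s, (ρ i).IsHermitian)
    {σ : Matrix n n ℂ} (hσ : σ.IsHermitian) :
    traceDist (∑ i ∈ s, w i • ρ i) σ ≤ ∑ i ∈ s, w i * traceDist (ρ i) σ := by
  have hsplit : ∑ i ∈ s, w i • ρ i - σ = ∑ i ∈ s, w i • (ρ i - σ) := by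
    simp only [smul_sub]
    rw [Finset.sum_sub_distrib, ← Finset.sum_smul, hw₁, one_smul]
  have hterm : ∀ i ∈ s, (w i • (ρ i - σ)).IsHermitian := fun i hi =>
    ((hρ i hi).sub hσ).smul (IsSelfAdjoint.all (w i))
  calc traceDist (∑ i ∈ s, w i • ρ i) σ = 1 / 2 * traceNorm (∑ i ∈ s, w i • (ρ i - σ)) := by
        rw [traceDist, hsplit]
    _ ≤ 1 / 2 * ∑ i ∈ s, traceNorm (w i • (ρ i - σ)) := by
        gcongr
        exact traceNorm_sum_le s hterm
    _ = ∑ i ∈ s, w i * traceDist (ρ i) σ := by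
        rw [Finset.mul_sum]
        refine Finset.sum_congr rfl fun i hi => ?_
        rw [traceNorm_smul, abs_of_nonneg (hw i hi), traceDist]
        ring

end TraceDistance

section PartialTrace

variable {dS dB : ℕ}

lemma ptraceB_sum {ι : Type*} (s : Finset ι)
    (M : ι → Matrix (Fin dS × Fin dB) (Fin dS × Fin dB) ℂ) :
    ptraceB (∑ i ∈ s, M i) = ∑ i ∈ s, ptraceB (M i) := by
  ext i j
  simp only [ptraceB, Matrix.sum_apply, of_apply]
  exact Finset.sum_comm

lemma Matrix.IsHermitian.ptraceB {M : Matrix (Fin dS × Fin dB) (Fin dS × Fin dB) ℂ}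
    (hM : M.IsHermitian) : (ptraceB M).IsHermitian := by
  ext i j
  simp only [conjTranspose_apply, _root_.ptraceB, of_apply, star_sum, hM.apply]

end PartialTrace

section Projection

variable {m : Type*} [Fintype m] {P ψ : Matrix m m ℂ}

lemma Matrix.PosSemidef.mul_mul_self_of_isHermitian (hψ : ψ.PosSemidef) (hP : P.IsHermitian) :
    (P * ψ * P).PosSemidef := by
  simpa only [hP.eq] using hψ.mul_mul_conjTranspose_same P

lemma Matrix.trace_mul_mul_self_of_isIdempotentElem (hP : IsIdempotentElem P) :
    (P * ψ * P).trace = (P * ψ).trace := by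
  rw [trace_mul_cycle, hP.eq]

end Projection

section Dephasing

variable {dS dB : ℕ} {ι : Type*} [Fintype ι]

lemma traceDist_ptraceB_sum_conj_le {P : ι → Matrix (Fin dS × Fin dB) (Fin dS × Fin dB) ℂ}
    (hP : ∀ k, (P k).IsHermitian) (hPP : ∀ k, IsIdempotentElem (P k)) (hPsum : ∑ k, P k = 1)
    {ψ : Matrix (Fin dS × Fin dB) (Fin dS × Fin dB) ℂ} (hψ : ψ.PosSemidef) (hψ₁ : ψ.trace = 1)
    {p : ι → ℝ} (hp : ∀ k, (p k : ℂ) = (P k * ψ).trace)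
    {σ : Matrix (Fin dS) (Fin dS) ℂ} (hσ : σ.IsHermitian) :
    traceDist (ptraceB (∑ k, P k * ψ * P k)) σ ≤
      ∑ k ∈ Finset.univ.filter (fun k => 0 < p k),
        p k * traceDist ((p k)⁻¹ • ptraceB (P k * ψ * P k)) σ := by
  set F := Finset.univ.filter (fun k => 0 < p k)
  have hconj (k : ι) : (P k * ψ * P k).PosSemidef := hψ.mul_mul_self_of_isHermitian (hP k)
  have htrace (k : ι) : (P k * ψ * P k).trace = p k :=
    (trace_mul_mul_self_of_isIdempotentElem (hPP k)).trans (hp k).symm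
  have hnonneg (k : ι) : 0 ≤ p k := by
    simpa only [htrace, Complex.zero_le_real] using (hconj k).trace_nonneg
  have hvanish (k : ι) (hk : k ∉ F) : P k * ψ * P k = 0 := by
    have hpk : p k = 0 := by simpa [F, (hnonneg k).ge_iff_eq'] using hk
    rw [← (hconj k).trace_eq_zero_iff, htrace, hpk, Complex.ofReal_zero]
  have hsum : ∑ k ∈ F, p k = 1 := by
    have hall : ∑ k, (p k : ℂ) = 1 := by
      simp only [hp, ← trace_sum, ← Finset.sum_mul, hPsum, one_mul, hψ₁]
    rw [Finset.sum_filter_of_ne fun k _ hk => (hnonneg k).lt_of_ne' hk]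
    exact_mod_cast hall
  have hsplit : ptraceB (∑ k, P k * ψ * P k) =
      ∑ k ∈ F, p k • ((p k)⁻¹ • ptraceB (P k * ψ * P k)) := by
    rw [← Finset.sum_subset (Finset.filter_subset _ _) fun k _ hk => hvanish k hk, ptraceB_sum]
    exact Finset.sum_congr rfl fun k hk =>
      (smul_inv_smul₀ (Finset.mem_filter.mp hk).2.ne' _).symm
  rw [hsplit]
  exact traceDist_sum_smul_le F (fun k _ => hnonneg k) hsum
    (fun k _ => (hconj k).isHermitian.ptraceB.smul (IsSelfAdjoint.all _)) hσ

end Dephasing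

theorem distinguishability_of_dephased_states_general {dS dB d' : ℕ}
    (P : Fin d' → Matrix (Fin dS × Fin dB) (Fin dS × Fin dB) ℂ)
    (hPherm : ∀ k, (P k).IsHermitian)
    (hPorth : ∀ k l, P k * P l = if k = l then P k else 0)
    (hPsum : ∑ k, P k = 1)
    (φ : Fin 2 → (Fin dS → ℂ)) (χ : Fin 2 → (Fin dB → ℂ))
    (hφ : ∀ j, star (φ j) ⬝ᵥ φ j = 1) (hχ : ∀ j, star (χ j) ⬝ᵥ χ j = 1)
    (ψ : Fin 2 → Matrix (Fin dS × Fin dB) (Fin dS × Fin dB) ℂ)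
    (hψ : ∀ j, ψ j = (vecMulVec (φ j) (star (φ j))) ⊗ₖ (vecMulVec (χ j) (star (χ j))))
    (p : Fin 2 → Fin d' → ℝ) (hp : ∀ j k, (p j k : ℂ) = (P k * ψ j).trace)
    (ωS : Fin 2 → Matrix (Fin dS) (Fin dS) ℂ)
    (hωS : ∀ j, ωS j = ptraceB (∑ k, P k * ψ j * P k))
    (R : Fin 2 → ℝ)
    (hR : ∀ j, R j = ∑ k ∈ Finset.univ.filter (fun k => 0 < p j k),
        p j k * traceDist ((p j k)⁻¹ • ptraceB (P k * ψ j * P k))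
          (vecMulVec (φ j) (star (φ j)))) :
    traceDist (ωS 0) (ωS 1)
      ≥ traceDist (vecMulVec (φ 0) (star (φ 0))) (vecMulVec (φ 1) (star (φ 1)))
        - R 0 - R 1 := by
  have hPP (k : Fin d') : IsIdempotentElem (P k) := (hPorth k k).trans (if_pos rfl)
  have hψpsd (j : Fin 2) : (ψ j).PosSemidef := hψ j ▸
    (posSemidef_vecMulVec_self_star _).kronecker (posSemidef_vecMulVec_self_star _)
  have hψtr (j : Fin 2) : (ψ j).trace = 1 := by
    rw [hψ, trace_kronecker, trace_vecMulVec, trace_vecMulVec, dotProduct_comm, hφ,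
      dotProduct_comm, hχ, one_mul]
  have hσ (j : Fin 2) : (vecMulVec (φ j) (star (φ j))).IsHermitian :=
    (posSemidef_vecMulVec_self_star _).isHermitian
  have hω (j : Fin 2) : (ωS j).IsHermitian := by
    rw [hωS]
    exact (posSemidef_sum _ fun k _ => (hψpsd j).mul_mul_self_of_isHermitian (hPherm k))
      |>.isHermitian.ptraceB
  have hD (j : Fin 2) : traceDist (ωS j) (vecMulVec (φ j) (star (φ j))) ≤ R j := by
    rw [hωS, hR]
    exact traceDist_ptraceB_sum_conj_le hPherm hPP hPsum (hψpsd j) (hψtr j) (hp j) (hσ j)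
  have h₁ := traceDist_triangle (hσ 0) (hω 0) (hω 1)
  have h₂ := traceDist_triangle (hσ 0) (hω 1) (hσ 1)
  rw [traceDist_comm _ (ωS 0)] at h₁
  linarith [hD 0, hD 1]

/-- **Distinguishability of dephased states** (absence of initial state independence for
Hamiltonians with little entanglement in the eigenbasis). -/
theorem distinguishability_of_dephased_states {dS dB d' : ℕ}
    (H : Matrix (Fin dS × Fin dB) (Fin dS × Fin dB) ℂ) (hH : H.IsHermitian)
    (E : Fin d' → ℝ) (hE : StrictMono E)
    (P : Fin d' → Matrix (Fin dS × Fin dB) (Fin dS × Fin dB) ℂ)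
    (hPherm : ∀ k, (P k).IsHermitian)
    (hPorth : ∀ k l, P k * P l = if k = l then P k else 0)
    (hPsum : ∑ k, P k = 1)
    (hHspec : H = ∑ k, (E k : ℂ) • P k)
    (φ : Fin 2 → (Fin dS → ℂ)) (χ : Fin 2 → (Fin dB → ℂ))
    (hφ : ∀ j, star (φ j) ⬝ᵥ φ j = 1) (hχ : ∀ j, star (χ j) ⬝ᵥ χ j = 1)
    (ψ : Fin 2 → Matrix (Fin dS × Fin dB) (Fin dS × Fin dB) ℂ)
    (hψ : ∀ j, ψ j = (vecMulVec (φ j) (star (φ j))) ⊗ₖ (vecMulVec (χ j) (star (χ j))))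
    (p : Fin 2 → Fin d' → ℝ) (hp : ∀ j k, (p j k : ℂ) = (P k * ψ j).trace)
    (ωS : Fin 2 → Matrix (Fin dS) (Fin dS) ℂ)
    (hωS : ∀ j, ωS j = ptraceB (∑ k, P k * ψ j * P k))
    (R : Fin 2 → ℝ)
    (hR : ∀ j, R j = ∑ k ∈ Finset.univ.filter (fun k => 0 < p j k),
        p j k * traceDist ((p j k)⁻¹ • ptraceB (P k * ψ j * P k))
          (vecMulVec (φ j) (star (φ j)))) :
    traceDist (ωS 0) (ωS 1)
      ≥ traceDist (vecMulVec (φ 0) (star (φ 0))) (vecMulVec (φ 1) (star (φ 1)))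
        - R 0 - R 1 :=
  distinguishability_of_dephased_states_general P hPherm hPorth hPsum φ χ hφ hχ ψ hψ p hp ωS hωS R
    hR
end
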